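/- arXiv:1203.2720 — 12 statements merged into one kernel-verified Lean document; each statement's English description precedes it below -/
import Mathlib

section
/- Let R be a ring and M a nonzero slightly compressible R-module. Then M is critically compressible if and only if for every submodule N of M, every nonzero R-linear map f : N → M is injective. -/
/-- A nonzero slightly compressible module is critically compressible iff every
nonzero partial endomorphism is injective. -/
theorem stmt_2 {R M : Type*} [Ring R] [AddCommGroup M] [Module R M] [Nontrivial M]
    (hsc : ∀ X : Submodule R M, X ≠ ⊥ → ∃ f : M →ₗ[R] X, f ≠ 0) :
    ((∀ N : Submodule R M, N ≠ ⊥ → ∃ f : M →ₗ[R] N, Function.Injective f) ∧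
      (∀ N : Submodule R M, N ≠ ⊥ → ¬∃ f : M →ₗ[R] (M ⧸ N), Function.Injective f)) ↔
      (∀ (N : Submodule R M) (f : N →ₗ[R] M), f ≠ 0 → Function.Injective f) := by
  constructor
  · rintro ⟨hcomp, hcrit⟩ N f hf
    by_contra hinj
    have hker : LinearMap.ker f ≠ ⊥ := fun h => hinj (LinearMap.ker_eq_bot.mp h)
    set K : Submodule R M := (LinearMap.ker f).map N.subtype with hK
    have hKne : K ≠ ⊥ := by
      obtain ⟨x, hx, hx0⟩ := (Submodule.ne_bot_iff _).mp hker
      exact (Submodule.ne_bot_iff _).mpr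
        ⟨x, Submodule.mem_map_of_mem hx, by simpa using fun h => hx0 (Subtype.ext h)⟩
    have hrange : LinearMap.range f ≠ ⊥ := by
      simpa [LinearMap.range_eq_bot] using hf
    obtain ⟨g, hg⟩ := hcomp (LinearMap.range f) hrange
    have hle : LinearMap.ker f ≤ Submodule.comap N.subtype K := fun x hx =>
      Submodule.mem_map_of_mem hx
    set φ := Submodule.mapQ (LinearMap.ker f) K N.subtype hle with hφ
    have hφinj : Function.Injective φ := by
      rw [← LinearMap.ker_eq_bot, eq_bot_iff]
      intro x hx
      obtain ⟨y, rfl⟩ := Submodule.Quotient.mk_surjective _ x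
      have h0 : φ (Submodule.Quotient.mk y) = 0 := hx
      rw [Submodule.mapQ_apply] at h0
      have hy : (N.subtype y) ∈ K := (Submodule.Quotient.mk_eq_zero _).mp h0
      obtain ⟨z, hz, hzy⟩ := hy
      have hzy' : z = y := Subtype.ext hzy
      subst hzy'
      simpa [Submodule.mem_bot, Submodule.Quotient.mk_eq_zero] using hz
    refine hcrit K hKne ⟨φ ∘ₗ (f.quotKerEquivRange.symm.toLinearMap) ∘ₗ g, ?_⟩
    exact hφinj.comp ((f.quotKerEquivRange.symm.injective).comp hg)
  · intro h
    constructor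
    · intro N hN
      obtain ⟨f, hf⟩ := hsc N hN
      set g : (⊤ : Submodule R M) →ₗ[R] M :=
        N.subtype ∘ₗ f ∘ₗ (Submodule.topEquiv : (⊤ : Submodule R M) ≃ₗ[R] M).toLinearMap
        with hgdef
      have hg0 : g ≠ 0 := by
        intro hg
        apply hf
        ext x
        have := congrFun (congrArg (fun (h : _ →ₗ[R] M) => h.toFun) hg) ⟨x, trivial⟩
        simpa [hgdef] using this
      have hginj := h ⊤ g hg0
      refine ⟨f, fun a b hab => ?_⟩
      have : g ⟨a, trivial⟩ = g ⟨b, trivial⟩ := by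
        simp [hgdef, hab]
      simpa using congrArg Subtype.val (hginj this)
    · rintro N hN ⟨g, hg⟩
      set π := N.mkQ with hπ
      set S : Submodule R M := Submodule.comap π (LinearMap.range g) with hS
      have hmem : ∀ x : S, π (S.subtype x) ∈ LinearMap.range g := fun x => x.2
      set c : S →ₗ[R] LinearMap.range g :=
        LinearMap.codRestrict _ (π ∘ₗ S.subtype) hmem with hc
      set e := LinearEquiv.ofInjective g hg with he
      set h' : S →ₗ[R] M := e.symm.toLinearMap ∘ₗ c with hh'
      have key : ∀ z : S, g (h' z) = π z := by
        intro z
        have : (e (e.symm (c z)) : M ⧸ N) = (c z : M ⧸ N) := by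
          rw [e.apply_symm_apply]
        simp only [hh', he, hc] at this ⊢; simp only [LinearEquiv.ofInjective_apply] at this; exact this
      obtain ⟨m, hm⟩ := exists_ne (0 : M)
      obtain ⟨x, hx⟩ := Submodule.Quotient.mk_surjective N (g m)
      have hxS : x ∈ S := by
        simp only [hS, Submodule.mem_comap]
        exact ⟨m, hx.symm⟩
      have hh'0 : h' ≠ 0 := by
        intro h0
        apply hm
        have hkey := key ⟨x, hxS⟩
        rw [h0] at hkey
        simp only [LinearMap.zero_apply, map_zero] at hkey
        apply hg
        rw [map_zero, ← hx]
        simpa [hπ] using hkey.symm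
      obtain ⟨n, hn, hn0⟩ := (Submodule.ne_bot_iff _).mp hN
      have hnS : n ∈ S := by
        simp only [hS, Submodule.mem_comap]
        exact ⟨0, by simp [hπ, Submodule.Quotient.mk_eq_zero, (Submodule.mkQ_apply N n) ▸ (Submodule.Quotient.mk_eq_zero N).mpr hn]⟩
      have hker : h' ⟨n, hnS⟩ = 0 := by
        apply hg
        rw [key ⟨n, hnS⟩]
        simp [hπ, (Submodule.Quotient.mk_eq_zero N).mpr hn]
      have := h S h' hh'0
      have : (⟨n, hnS⟩ : S) = 0 := this (by simpa using hker)
      exact hn0 (by simpa using congrArg Subtype.val this)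
end

section
/- Let R be a ring and M a nonzero critically compressible R-module. Then M is indecomposable: there do not exist submodules M₁ and M₂ of M with M₁ ≠ 0, M₂ ≠ 0, M₁ ∩ M₂ = 0 and M₁ + M₂ = M. -/
/-- Every nonzero critically compressible module is indecomposable. -/
theorem stmt_6 {R M : Type*} [Ring R] [AddCommGroup M] [Module R M] [Nontrivial M]
    (hcomp : ∀ N : Submodule R M, N ≠ ⊥ → ∃ f : M →ₗ[R] N, Function.Injective f)
    (hcrit : ∀ N : Submodule R M, N ≠ ⊥ → ¬∃ f : M →ₗ[R] (M ⧸ N), Function.Injective f) :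
    ¬∃ M₁ M₂ : Submodule R M, M₁ ≠ ⊥ ∧ M₂ ≠ ⊥ ∧ M₁ ⊓ M₂ = ⊥ ∧ M₁ ⊔ M₂ = ⊤ := by
  rintro ⟨M₁, M₂, h1, h2, hinf, hsup⟩
  obtain ⟨f, hf⟩ := hcomp M₁ h1
  refine hcrit M₂ h2 ⟨(M₂.mkQ.comp M₁.subtype).comp f, ?_⟩
  intro x y hxy
  apply hf
  have h : ((f x : M) - (f y : M)) ∈ M₂ := by
    rw [← Submodule.Quotient.eq]
    exact hxy
  have h' : ((f x : M) - (f y : M)) ∈ M₁ := sub_mem (f x).2 (f y).2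
  have : ((f x : M) - (f y : M)) ∈ M₁ ⊓ M₂ := ⟨h', h⟩
  rw [hinf, Submodule.mem_bot, sub_eq_zero] at this
  exact Subtype.ext this
end

section
/- Let R be a ring and M a nonzero R-module. If for every submodule N of M every nonzero R-linear map f : N → M is injective, then M is uniform: any two nonzero submodules of M have nonzero intersection. -/
/-!
If `N₁ ⊓ N₂ = ⊥`, the projection of `N₁ ⊔ N₂` onto `N₁` along `N₂` is a partial endomorphism of
`M` which is the identity on `N₁`, hence nonzero, and kills `N₂`, hence not injective.
-/

namespace LinearPMap

variable {R M : Type*} [Ring R] [AddCommGroup M] [Module R M] {p q : Submodule R M}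

noncomputable def projOfDisjoint (h : Disjoint p q) : M →ₗ.[R] M :=
  (LinearMap.id.toPMap p).sup ((0 : M →ₗ[R] M).toPMap q) (sup_h_of_disjoint _ _ h)

theorem projOfDisjoint_apply_of_mem_left (h : Disjoint p q) (x : (projOfDisjoint h).domain)
    (hx : (x : M) ∈ p) : projOfDisjoint h x = x :=
  ((LinearPMap.left_le_sup (LinearMap.id.toPMap p) ((0 : M →ₗ[R] M).toPMap q) _).2
    (x := ⟨x, hx⟩) (y := x) rfl).symm

theorem projOfDisjoint_apply_of_mem_right (h : Disjoint p q) (x : (projOfDisjoint h).domain)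
    (hx : (x : M) ∈ q) : projOfDisjoint h x = 0 :=
  ((LinearPMap.right_le_sup (LinearMap.id.toPMap p) ((0 : M →ₗ[R] M).toPMap q) _).2
    (x := ⟨x, hx⟩) (y := x) rfl).symm

end LinearPMap

open LinearPMap in
theorem Submodule.exists_ne_zero_not_injective_of_disjoint {R M : Type*} [Ring R]
    [AddCommGroup M] [Module R M] {N₁ N₂ : Submodule R M} (h : Disjoint N₁ N₂)
    (h₁ : N₁ ≠ ⊥) (h₂ : N₂ ≠ ⊥) :
    ∃ f : ↥(N₁ ⊔ N₂) →ₗ[R] M, f ≠ 0 ∧ ¬ Function.Injective f := by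
  obtain ⟨a, ha, ha0⟩ := N₁.ne_bot_iff.1 h₁
  obtain ⟨b, hb, hb0⟩ := N₂.ne_bot_iff.1 h₂
  let x : ↥(N₁ ⊔ N₂) := ⟨a, mem_sup_left ha⟩
  let y : ↥(N₁ ⊔ N₂) := ⟨b, mem_sup_right hb⟩
  let f : ↥(N₁ ⊔ N₂) →ₗ[R] M := (projOfDisjoint h).toFun
  have hx : f x = a := projOfDisjoint_apply_of_mem_left h x ha
  have hy : f y = 0 := projOfDisjoint_apply_of_mem_right h y hb
  refine ⟨f, fun h0 ↦ ha0 ?_, fun hinj ↦ hb0 ?_⟩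
  · rw [← hx, h0, LinearMap.zero_apply]
  · exact congrArg Subtype.val (hinj (hy.trans f.map_zero.symm) : y = 0)

theorem stmt_7_general {R M : Type*} [Ring R] [AddCommGroup M] [Module R M]
    (hmono : ∀ (N : Submodule R M) (f : N →ₗ[R] M), f ≠ 0 → Function.Injective f) :
    ∀ N₁ N₂ : Submodule R M, N₁ ≠ ⊥ → N₂ ≠ ⊥ → N₁ ⊓ N₂ ≠ ⊥ := by
  intro N₁ N₂ h₁ h₂ h
  obtain ⟨f, hf0, hf⟩ :=
    Submodule.exists_ne_zero_not_injective_of_disjoint (disjoint_iff.2 h) h₁ h₂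
  exact hf (hmono _ f hf0)

/-- If every nonzero partial endomorphism of a nonzero module `M` is injective,
then `M` is uniform. -/
theorem stmt_7 {R M : Type*} [Ring R] [AddCommGroup M] [Module R M] [Nontrivial M]
    (hmono : ∀ (N : Submodule R M) (f : N →ₗ[R] M), f ≠ 0 → Function.Injective f) :
    ∀ N₁ N₂ : Submodule R M, N₁ ≠ ⊥ → N₂ ≠ ⊥ → N₁ ⊓ N₂ ≠ ⊥ :=
  stmt_7_general hmono
end

section
/- Let R be a ring and M a nonzero critically compressible R-module. Then M is a CS module: every submodule of M is essential in a direct summand of M. -/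
/-- Every nonzero critically compressible module is a CS module: every submodule
is essential in a direct summand. -/
theorem stmt_8 {R M : Type*} [Ring R] [AddCommGroup M] [Module R M] [Nontrivial M]
    (hcomp : ∀ N : Submodule R M, N ≠ ⊥ → ∃ f : M →ₗ[R] N, Function.Injective f)
    (hcrit : ∀ N : Submodule R M, N ≠ ⊥ → ¬∃ f : M →ₗ[R] (M ⧸ N), Function.Injective f) :
    ∀ N : Submodule R M, ∃ D : Submodule R M,
      (∃ D' : Submodule R M, D ⊓ D' = ⊥ ∧ D ⊔ D' = ⊤) ∧ N ≤ D ∧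
        (∀ L : Submodule R M, L ≤ D → L ⊓ N = ⊥ → L = ⊥) := by
  intro N
  by_cases hN : N = ⊥
  · refine ⟨⊥, ⟨⊤, by simp, by simp⟩, hN ▸ le_rfl, ?_⟩
    intro L hL _
    exact le_bot_iff.mp hL
  · refine ⟨⊤, ⟨⊥, by simp, by simp⟩, le_top, ?_⟩
    intro L _ hLN
    by_contra hL
    obtain ⟨f, hf⟩ := hcomp L hL
    refine hcrit N hN ⟨N.mkQ.comp (L.subtype.comp f), ?_⟩
    rw [← LinearMap.ker_eq_bot, LinearMap.ker_eq_bot']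
    intro x hx
    have hmem : (f x : M) ∈ N := by
      simpa [Submodule.Quotient.mk_eq_zero] using hx
    have : (f x : M) ∈ L ⊓ N := ⟨(f x).2, hmem⟩
    rw [hLN, Submodule.mem_bot] at this
    have : f x = 0 := Subtype.ext this
    exact hf (by simpa using this)
end

section
/- Let R be a ring and M a nonzero critically compressible R-module. Then M is continuous if and only if every injective R-linear endomorphism of M is surjective. -/
/-- A critically compressible module is uniform. -/
theorem stmt9_uniform {R M : Type*} [Ring R] [AddCommGroup M] [Module R M]
    (hcomp : ∀ N : Submodule R M, N ≠ ⊥ → ∃ f : M →ₗ[R] N, Function.Injective f)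
    (hcrit : ∀ N : Submodule R M, N ≠ ⊥ → ¬∃ f : M →ₗ[R] (M ⧸ N), Function.Injective f)
    (A B : Submodule R M) (hA : A ≠ ⊥) (hB : B ≠ ⊥) : A ⊓ B ≠ ⊥ := by
  intro hAB
  obtain ⟨f, hf⟩ := hcomp A hA
  apply hcrit B hB
  refine ⟨B.mkQ.comp (A.subtype.comp f), ?_⟩
  intro x y hxy
  apply hf
  apply Subtype.ext
  have hmem : ((f x : M) - (f y : M)) ∈ B := by
    rwa [LinearMap.comp_apply, LinearMap.comp_apply, LinearMap.comp_apply,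
      LinearMap.comp_apply, Submodule.mkQ_apply, Submodule.mkQ_apply,
      Submodule.Quotient.eq] at hxy
  have hmemA : ((f x : M) - (f y : M)) ∈ A := A.sub_mem (f x).2 (f y).2
  have : ((f x : M) - (f y : M)) ∈ A ⊓ B := ⟨hmemA, hmem⟩
  rw [hAB, Submodule.mem_bot, sub_eq_zero] at this
  exact this

/-- A nonzero critically compressible module is continuous (satisfies C₁ and C₂)
iff every injective endomorphism of it is surjective. -/
theorem stmt_9 {R M : Type*} [Ring R] [AddCommGroup M] [Module R M] [Nontrivial M]
    (hcomp : ∀ N : Submodule R M, N ≠ ⊥ → ∃ f : M →ₗ[R] N, Function.Injective f)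
    (hcrit : ∀ N : Submodule R M, N ≠ ⊥ → ¬∃ f : M →ₗ[R] (M ⧸ N), Function.Injective f) :
    ((∀ N : Submodule R M, ∃ D : Submodule R M,
        (∃ D' : Submodule R M, D ⊓ D' = ⊥ ∧ D ⊔ D' = ⊤) ∧ N ≤ D ∧
          (∀ L : Submodule R M, L ≤ D → L ⊓ N = ⊥ → L = ⊥)) ∧
      (∀ N D : Submodule R M, (∃ D' : Submodule R M, D ⊓ D' = ⊥ ∧ D ⊔ D' = ⊤) →
        Nonempty (N ≃ₗ[R] D) → ∃ N' : Submodule R M, N ⊓ N' = ⊥ ∧ N ⊔ N' = ⊤)) ↔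
      (∀ f : M →ₗ[R] M, Function.Injective f → Function.Surjective f) := by
  have uniform := stmt9_uniform hcomp hcrit
  constructor
  · rintro ⟨-, hC2⟩ f hf
    set N := LinearMap.range f with hN
    have hNe : Nonempty (N ≃ₗ[R] (⊤ : Submodule R M)) :=
      ⟨(LinearEquiv.ofInjective f hf).symm.trans (Submodule.topEquiv.symm)⟩
    obtain ⟨N', h1, h2⟩ := hC2 N ⊤ ⟨⊥, by simp, by simp⟩ hNe
    have hNne : N ≠ ⊥ := by
      intro h
      obtain ⟨x, hx⟩ := exists_ne (0 : M)
      apply hx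
      apply hf
      have : f x ∈ N := LinearMap.mem_range_self f x
      rw [h, Submodule.mem_bot] at this
      simp [this]
    have hN' : N' = ⊥ := by
      by_contra hN'
      exact uniform N N' hNne hN' h1
    rw [hN', sup_bot_eq] at h2
    exact LinearMap.range_eq_top.mp h2
  · intro hsurj
    constructor
    · intro N
      by_cases hN : N = ⊥
      · refine ⟨⊥, ⟨⊤, by simp, by simp⟩, by simp [hN], ?_⟩
        intro L hL _
        exact le_bot_iff.mp hL
      · refine ⟨⊤, ⟨⊥, by simp, by simp⟩, le_top, ?_⟩
        intro L _ hLN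
        by_contra hL
        exact uniform L N hL hN hLN
    · rintro N D ⟨D', hD1, hD2⟩ ⟨e⟩
      by_cases hD : D = ⊥
      · have : Subsingleton D := by rw [hD]; infer_instance
        have : Subsingleton N := e.toEquiv.subsingleton
        have hNbot : N = ⊥ := by
          rw [Submodule.eq_bot_iff]
          intro x hx
          have h := Subsingleton.elim (⟨x, hx⟩ : N) ⟨0, N.zero_mem⟩
          exact congrArg Subtype.val h
        exact ⟨⊤, by simp [hNbot], by simp⟩
      · have hD' : D' = ⊥ := by
          by_contra hD'
          exact uniform D D' hD hD' hD1
        rw [hD', sup_bot_eq] at hD2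
        subst hD2
        have e' : N ≃ₗ[R] M := e.trans Submodule.topEquiv
        set g : M →ₗ[R] M := N.subtype.comp e'.symm.toLinearMap with hg
        have hginj : Function.Injective g :=
          N.injective_subtype.comp e'.symm.injective
        have hgsurj := hsurj g hginj
        have hNtop : N = ⊤ := by
          rw [Submodule.eq_top_iff']
          intro m
          obtain ⟨x, hx⟩ := hgsurj m
          rw [← hx]
          exact (e'.symm x).2
        exact ⟨⊥, by simp, by simp [hNtop]⟩
end

section
/- Let R be a ring and M a critically compressible R-module. Then every nonzero submodule N of M is itself a critically compressible R-module. -/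
/-- Every nonzero submodule of a critically compressible module is critically
compressible. -/
theorem stmt_11 {R M : Type*} [Ring R] [AddCommGroup M] [Module R M]
    (hcomp : ∀ N : Submodule R M, N ≠ ⊥ → ∃ f : M →ₗ[R] N, Function.Injective f)
    (hcrit : ∀ N : Submodule R M, N ≠ ⊥ → ¬∃ f : M →ₗ[R] (M ⧸ N), Function.Injective f)
    (N : Submodule R M) (hN : N ≠ ⊥) :
    (∀ P : Submodule R N, P ≠ ⊥ → ∃ f : N →ₗ[R] P, Function.Injective f) ∧
      (∀ P : Submodule R N, P ≠ ⊥ → ¬∃ f : N →ₗ[R] (N ⧸ P), Function.Injective f) := by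
  constructor
  · intro P hP
    set P' := P.map N.subtype with hP'
    have hP'ne : P' ≠ ⊥ := by
      intro h
      exact hP (Submodule.map_injective_of_injective N.injective_subtype
        (by simpa using h))
    obtain ⟨g, hg⟩ := hcomp P' hP'ne
    let e : P' ≃ₗ[R] P := (Submodule.equivMapOfInjective N.subtype N.injective_subtype P).symm
    exact ⟨(e.toLinearMap.comp g).comp N.subtype,
      e.injective.comp (hg.comp N.injective_subtype)⟩
  · rintro P hP ⟨f, hf⟩
    set P' := P.map N.subtype with hP'
    have hP'ne : P' ≠ ⊥ := by
      intro h
      exact hP (Submodule.map_injective_of_injective N.injective_subtype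
        (by simpa using h))
    obtain ⟨g, hg⟩ := hcomp N hN
    -- map N⧸P → M⧸P'
    have hker : P ≤ LinearMap.ker (P'.mkQ.comp N.subtype) := by
      intro x hx
      simp only [LinearMap.mem_ker, LinearMap.comp_apply, Submodule.mkQ_apply,
        Submodule.Quotient.mk_eq_zero]
      exact Submodule.mem_map_of_mem hx
    let h : (N ⧸ P) →ₗ[R] (M ⧸ P') := P.liftQ (P'.mkQ.comp N.subtype) hker
    have hkereq : LinearMap.ker (P'.mkQ.comp N.subtype) ≤ P := by
      rw [LinearMap.ker_comp, Submodule.ker_mkQ, hP',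
        Submodule.comap_map_eq_of_injective N.injective_subtype]
    have hhinj : Function.Injective h := by
      rw [← LinearMap.ker_eq_bot]
      exact Submodule.ker_liftQ_eq_bot P _ hker hkereq
    exact hcrit P' hP'ne ⟨(h.comp f).comp g, hhinj.comp (hf.comp hg)⟩
end

section
/- Let R be a ring and M a nonzero compressible R-module that is indecomposable and injective. Suppose that for every submodule N of M and every nonzero R-linear map f : N → M, the kernel of f is uniform and nonsingular, i.e., any two nonzero submodules of ker f intersect nontrivially, and for every nonzero x in ker f the left ideal {r ∈ R : r • x = 0} is not essential in R. Then M is critically compressible. -/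
/-- A nonzero compressible, indecomposable, injective module all of whose nonzero
partial endomorphisms have uniform nonsingular kernels is critically compressible. -/
theorem stmt_12 {R M : Type*} [Ring R] [AddCommGroup M] [Module R M] [Nontrivial M]
    (hcomp : ∀ N : Submodule R M, N ≠ ⊥ → ∃ f : M →ₗ[R] N, Function.Injective f)
    (hindec : ¬∃ M₁ M₂ : Submodule R M, M₁ ≠ ⊥ ∧ M₂ ≠ ⊥ ∧ M₁ ⊓ M₂ = ⊥ ∧ M₁ ⊔ M₂ = ⊤)
    (hinj : Module.Injective R M)
    (hker : ∀ (N : Submodule R M) (f : N →ₗ[R] M), f ≠ 0 →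
      ((∀ A B : Submodule R N, A ≤ LinearMap.ker f → B ≤ LinearMap.ker f →
          A ≠ ⊥ → B ≠ ⊥ → A ⊓ B ≠ ⊥) ∧
        (∀ x : N, x ∈ LinearMap.ker f → x ≠ 0 →
          ¬∀ J : Submodule R R, J ≠ ⊥ →
            J ⊓ LinearMap.ker (LinearMap.toSpanSingleton R M (x : M)) ≠ ⊥))) :
    (∀ N : Submodule R M, N ≠ ⊥ → ∃ f : M →ₗ[R] N, Function.Injective f) ∧
      (∀ N : Submodule R M, N ≠ ⊥ → ¬∃ f : M →ₗ[R] (M ⧸ N), Function.Injective f) := by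
  refine ⟨hcomp, ?_⟩
  rintro N hN ⟨g, hg⟩
  set π : M →ₗ[R] M ⧸ N := N.mkQ with hπ
  set S : Submodule R M := (LinearMap.range g).comap π with hS
  set e : M ≃ₗ[R] LinearMap.range g := LinearEquiv.ofInjective g hg with he
  have hmemS : ∀ s : M, s ∈ S ↔ π s ∈ LinearMap.range g := fun s => Iff.rfl
  set h : S →ₗ[R] M :=
    (e.symm.toLinearMap) ∘ₗ LinearMap.codRestrict (LinearMap.range g)
      (π ∘ₗ S.subtype) (fun c => c.2) with hh
  have hgh : ∀ s : S, g (h s) = π (s : M) := by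
    intro s
    have h1 : h s = e.symm ⟨π (s : M), s.2⟩ := rfl
    rw [h1, ← LinearEquiv.ofInjective_apply g (h := hg), ← he, e.apply_symm_apply]
  have hker0 : ∀ s : S, h s = 0 ↔ (s : M) ∈ N := by
    intro s
    constructor
    · intro h0
      have := hgh s
      rw [h0, map_zero] at this
      rw [← Submodule.Quotient.mk_eq_zero]
      exact this.symm
    · intro hsN
      apply hg
      rw [hgh s, map_zero]
      rwa [hπ, Submodule.mkQ_apply, Submodule.Quotient.mk_eq_zero]
  obtain ⟨m, hm0⟩ := exists_ne (0 : M)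
  obtain ⟨a, ha⟩ := Submodule.mkQ_surjective N (g m)
  have haS : a ∈ S := by rw [hmemS]; exact ⟨m, ha.symm⟩
  have hham : h ⟨a, haS⟩ = m := by
    apply hg
    rw [hgh ⟨a, haS⟩]
    exact ha
  have hh0 : h ≠ 0 := by
    intro h0
    apply hm0
    rw [← hham, h0]; rfl
  obtain ⟨huni, hns⟩ := hker S h hh0
  obtain ⟨φ, hφ⟩ := hcomp N hN
  have hNS : ∀ x : M, x ∈ N → x ∈ S := by
    intro x hx
    rw [hmemS, hπ, Submodule.mkQ_apply, (Submodule.Quotient.mk_eq_zero N).2 hx]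
    exact ⟨0, map_zero g⟩
  -- transported nonsingularity of M
  have hnsM : ∀ x : M, x ≠ 0 → ∃ J : Submodule R R, J ≠ ⊥ ∧
      J ⊓ LinearMap.ker (LinearMap.toSpanSingleton R M x) = ⊥ := by
    intro x hx
    have hφx : ((φ x : M)) ∈ N := (φ x).2
    set xs : S := ⟨(φ x : M), hNS _ hφx⟩ with hxs
    have hxsker : xs ∈ LinearMap.ker h := by
      rw [LinearMap.mem_ker, hker0]; exact hφx
    have hxs0 : xs ≠ 0 := by
      intro h0
      apply hx
      have h1 : (φ x : M) = 0 := congrArg Subtype.val h0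
      have h2 : φ x = 0 := by rwa [ZeroMemClass.coe_eq_zero] at h1
      exact hφ (by rw [h2, map_zero])
    have := hns xs hxsker hxs0
    push_neg at this
    obtain ⟨J, hJ, hJ2⟩ := this
    refine ⟨J, hJ, ?_⟩
    have hkeq : LinearMap.ker (LinearMap.toSpanSingleton R M ((xs : M)))
        = LinearMap.ker (LinearMap.toSpanSingleton R M x) := by
      ext r
      simp only [LinearMap.mem_ker, LinearMap.toSpanSingleton_apply]
      constructor
      · intro hr
        have h1 : ((r • φ x : N) : M) = 0 := by
          rw [Submodule.coe_smul]; exact hr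
        have h1' : r • φ x = 0 := by rwa [ZeroMemClass.coe_eq_zero] at h1
        have h2 : φ (r • x) = 0 := by rw [map_smul]; exact h1'
        exact hφ (by rw [h2, map_zero])
      · intro hr
        have h1 : φ (r • x) = 0 := by rw [hr, map_zero]
        have h2 : r • φ x = 0 := by rw [← map_smul, h1]
        calc r • ((xs : M)) = ((r • φ x : N) : M) := by rw [Submodule.coe_smul]
          _ = 0 := by rw [h2]; rfl
    rwa [hkeq] at hJ2
  -- transported uniformity of M
  have huniM : ∀ A B : Submodule R M, A ≠ ⊥ → B ≠ ⊥ → A ⊓ B ≠ ⊥ := by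
    intro A B hA hB
    set A₁ : Submodule R M := (A.map φ).map N.subtype with hA₁
    set B₁ : Submodule R M := (B.map φ).map N.subtype with hB₁
    have hA₁N : A₁ ≤ N := by rintro x ⟨y, _, rfl⟩; exact y.2
    have hB₁N : B₁ ≤ N := by rintro x ⟨y, _, rfl⟩; exact y.2
    set A₂ : Submodule R S := A₁.comap S.subtype with hA₂
    set B₂ : Submodule R S := B₁.comap S.subtype with hB₂
    have hA₂k : A₂ ≤ LinearMap.ker h := by
      intro x hx
      rw [LinearMap.mem_ker, hker0]
      exact hA₁N hx
    have hB₂k : B₂ ≤ LinearMap.ker h := by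
      intro x hx
      rw [LinearMap.mem_ker, hker0]
      exact hB₁N hx
    have hne : ∀ (C : Submodule R M) (C₂ : Submodule R S), C ≠ ⊥ →
        C₂ = ((C.map φ).map N.subtype).comap S.subtype → C₂ ≠ ⊥ := by
      intro C C₂ hC hC₂def
      obtain ⟨c, hcC, hc0⟩ := Submodule.exists_mem_ne_zero_of_ne_bot hC
      have hmem : ((φ c : M)) ∈ (C.map φ).map N.subtype :=
        ⟨φ c, ⟨c, hcC, rfl⟩, rfl⟩
      have hmemS' : ((φ c : M)) ∈ S := hNS _ (φ c).2
      intro h0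
      have hx : (⟨(φ c : M), hmemS'⟩ : S) ∈ C₂ := by rw [hC₂def]; exact hmem
      rw [h0, Submodule.mem_bot] at hx
      apply hc0
      have h1 : (φ c : M) = 0 := congrArg Subtype.val hx
      have h2 : φ c = 0 := by rwa [ZeroMemClass.coe_eq_zero] at h1
      exact hφ (by rw [h2, map_zero])
    have h12 := huni A₂ B₂ hA₂k hB₂k (hne A A₂ hA hA₂) (hne B B₂ hB hB₂)
    obtain ⟨x, hx, hx0⟩ := Submodule.exists_mem_ne_zero_of_ne_bot h12
    obtain ⟨hxA, hxB⟩ := Submodule.mem_inf.1 hx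
    obtain ⟨ya, ⟨a', ha'A, ha'⟩, hya⟩ := hxA
    obtain ⟨yb, ⟨b', hb'B, hb'⟩, hyb⟩ := hxB
    have hyab : ya = yb := Subtype.ext (hya.trans hyb.symm)
    have hab : a' = b' := hφ (ha'.trans (hyab.trans hb'.symm))
    intro hbot
    have ha'0 : a' ≠ 0 := by
      intro h0
      apply hx0
      refine Subtype.ext (calc (x : M) = (ya : M) := hya.symm
        _ = ((φ a' : N) : M) := by rw [ha']
        _ = ((φ 0 : N) : M) := by rw [h0]
        _ = 0 := by rw [map_zero]; rfl)
    have hmem : a' ∈ A ⊓ B := ⟨ha'A, hab ▸ hb'B⟩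
    rw [hbot, Submodule.mem_bot] at hmem
    exact ha'0 hmem
  -- final contradiction
  obtain ⟨J, hJ, hJm⟩ := hnsM m hm0
  have key : J ⊓ LinearMap.ker (LinearMap.toSpanSingleton R M m) ≠ ⊥ := by
    by_cases hcase : J ⊓ LinearMap.ker (LinearMap.toSpanSingleton R M a) = ⊥
    · have hmap : (J.map (LinearMap.toSpanSingleton R M a)) ≠ ⊥ := by
        obtain ⟨r, hrJ, hr0⟩ := Submodule.exists_mem_ne_zero_of_ne_bot hJ
        intro h0
        have hra : r • a ∈ J.map (LinearMap.toSpanSingleton R M a) := ⟨r, hrJ, rfl⟩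
        rw [h0, Submodule.mem_bot] at hra
        have hrmem : r ∈ J ⊓ LinearMap.ker (LinearMap.toSpanSingleton R M a) :=
          Submodule.mem_inf.2 ⟨hrJ, LinearMap.mem_ker.2 hra⟩
        rw [hcase, Submodule.mem_bot] at hrmem
        exact hr0 hrmem
      have hint := huniM _ _ hmap hN
      obtain ⟨z, hz, hz0⟩ := Submodule.exists_mem_ne_zero_of_ne_bot hint
      obtain ⟨⟨r, hrJ, hrz⟩, hzN⟩ := Submodule.mem_inf.1 hz
      rw [LinearMap.toSpanSingleton_apply] at hrz
      have hr0 : r ≠ 0 := by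
        intro h0; apply hz0; rw [← hrz, h0, zero_smul]
      have hrm : r • m = 0 := by
        rw [← hham, ← map_smul, hker0]
        show r • a ∈ N
        rw [hrz]; exact hzN
      intro hbot
      have hrmem : r ∈ J ⊓ LinearMap.ker (LinearMap.toSpanSingleton R M m) :=
        Submodule.mem_inf.2 ⟨hrJ, LinearMap.mem_ker.2 hrm⟩
      rw [hbot, Submodule.mem_bot] at hrmem
      exact hr0 hrmem
    · obtain ⟨r, hr, hr0⟩ := Submodule.exists_mem_ne_zero_of_ne_bot hcase
      obtain ⟨hrJ, hrk⟩ := Submodule.mem_inf.1 hr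
      rw [LinearMap.mem_ker, LinearMap.toSpanSingleton_apply] at hrk
      have hrm : r • m = 0 := by
        rw [← hham, ← map_smul]
        have hsm : r • (⟨a, haS⟩ : S) = 0 := Subtype.ext (by exact hrk)
        rw [hsm, map_zero]
      intro hbot
      have hrmem : r ∈ J ⊓ LinearMap.ker (LinearMap.toSpanSingleton R M m) :=
        Submodule.mem_inf.2 ⟨hrJ, LinearMap.mem_ker.2 hrm⟩
      rw [hbot, Submodule.mem_bot] at hrmem
      exact hr0 hrmem
  exact key hJm
end

section
/- Let R be a ring and M a nonzero critically compressible R-module. Let Z be the singular submodule of M, i.e., a submodule Z of M such that x ∈ Z if and only if the left ideal {r ∈ R : r • x = 0} is essential in R. If Z is a direct summand of M, then Z = 0 or Z = M; that is, M is either singular or nonsingular. -/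
/-- If the singular submodule of a nonzero critically compressible module is a
direct summand, then the module is either singular or nonsingular. -/
theorem stmt_14 {R M : Type*} [Ring R] [AddCommGroup M] [Module R M] [Nontrivial M]
    (hcomp : ∀ N : Submodule R M, N ≠ ⊥ → ∃ f : M →ₗ[R] N, Function.Injective f)
    (hcrit : ∀ N : Submodule R M, N ≠ ⊥ → ¬∃ f : M →ₗ[R] (M ⧸ N), Function.Injective f)
    (Z : Submodule R M)
    (hZ : ∀ x : M, x ∈ Z ↔
      (∀ J : Submodule R R, J ≠ ⊥ →
        J ⊓ LinearMap.ker (LinearMap.toSpanSingleton R M x) ≠ ⊥))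
    (hsum : ∃ Z' : Submodule R M, Z ⊓ Z' = ⊥ ∧ Z ⊔ Z' = ⊤) :
    Z = ⊥ ∨ Z = ⊤ := by
  by_contra h
  push_neg at h
  obtain ⟨hZbot, hZtop⟩ := h
  obtain ⟨Z', hinf, hsup⟩ := hsum
  have hZ'bot : Z' ≠ ⊥ := by
    intro hb
    exact hZtop (by simpa [hb] using hsup)
  obtain ⟨f, hf⟩ := hcomp Z hZbot
  have hcompl : IsCompl Z Z' :=
    ⟨disjoint_iff.mpr hinf, codisjoint_iff.mpr hsup⟩
  have e : (M ⧸ Z') ≃ₗ[R] Z := Submodule.quotientEquivOfIsCompl Z' Z hcompl.symm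
  exact hcrit Z' hZ'bot ⟨(e.symm : Z →ₗ[R] M ⧸ Z').comp f, e.symm.injective.comp hf⟩
end

section
/- Let R be a nonzero ring with identity. Then the following are equivalent: (1) R, regarded as a module over itself, is self-similar (every nonzero submodule of R is isomorphic to R as an R-module) and every nonzero R-linear endomorphism of R is injective; (2) R is a principal ideal ring without zero divisors, i.e., R has no zero divisors and every submodule of R (as a module over itself) is generated by a single element. -/
/-- A nonzero ring `R` is self-similar with every nonzero endomorphism (of `R`
as a module over itself) injective iff `R` is a principal ideal ring without zero divisors. -/
theorem stmt_15 {R : Type*} [Ring R] [Nontrivial R] :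
    ((∀ N : Submodule R R, N ≠ ⊥ → Nonempty (N ≃ₗ[R] R)) ∧
      (∀ f : R →ₗ[R] R, f ≠ 0 → Function.Injective f)) ↔
      ((∀ a b : R, a * b = 0 → a = 0 ∨ b = 0) ∧
        (∀ N : Submodule R R, ∃ a : R, N = Submodule.span R {a})) := by
  constructor
  · rintro ⟨hss, hinj⟩
    constructor
    · intro a b hab
      by_cases hb : b = 0
      · exact Or.inr hb
      · left
        have hf : (LinearMap.toSpanSingleton R R b) ≠ 0 := by
          intro h
          apply hb
          have := congrFun (congrArg DFunLike.coe h) 1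
          simpa using this
        have := hinj _ hf
        have h0 : (LinearMap.toSpanSingleton R R b) a =
            (LinearMap.toSpanSingleton R R b) 0 := by
          simp [LinearMap.toSpanSingleton_apply, hab]
        exact this h0
    · intro N
      by_cases hN : N = ⊥
      · exact ⟨0, by rw [hN, Submodule.span_zero_singleton]⟩
      · obtain ⟨e⟩ := hss N hN
        refine ⟨(e.symm 1 : N), le_antisymm ?_ ?_⟩
        · intro x hx
          have : (⟨x, hx⟩ : N) = e (⟨x, hx⟩ : N) • e.symm 1 := by
            rw [← e.symm.map_smul, smul_eq_mul, mul_one, e.symm_apply_apply]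
          rw [Submodule.mem_span_singleton]
          exact ⟨e ⟨x, hx⟩, by rw [← Submodule.coe_smul, ← this]⟩
        · rw [Submodule.span_singleton_le_iff_mem]
          exact (e.symm 1).2
  · rintro ⟨hd, hpr⟩
    constructor
    · intro N hN
      obtain ⟨a, ha⟩ := hpr N
      have haN : a ∈ N := ha ▸ Submodule.mem_span_singleton_self a
      have ha0 : a ≠ 0 := by
        rintro rfl
        exact hN (by simp [ha])
      have hbij : Function.Bijective
          ((LinearMap.toSpanSingleton R R a).codRestrict N
            (fun r => by
              rw [ha, Submodule.mem_span_singleton]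
              exact ⟨r, rfl⟩)) := by
        constructor
        · intro x y hxy
          have : x • a = y • a := congrArg Subtype.val hxy
          have : (x - y) * a = 0 := by
            rw [sub_mul]; simpa [smul_eq_mul, sub_eq_zero] using this
          rcases hd _ _ this with h | h
          · exact sub_eq_zero.mp h
          · exact absurd h ha0
        · rintro ⟨x, hx⟩
          rw [ha, Submodule.mem_span_singleton] at hx
          obtain ⟨r, hr⟩ := hx
          exact ⟨r, Subtype.ext (by simpa using hr)⟩
      exact ⟨(LinearEquiv.ofBijective _ hbij).symm⟩
    · intro f hf
      have h1 : f 1 ≠ 0 := by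
        intro h
        apply hf
        apply LinearMap.ext
        intro r
        calc f r = r • f 1 := by rw [← f.map_smul, smul_eq_mul, mul_one]
        _ = 0 := by rw [h, smul_zero]
      intro x y hxy
      have : (x - y) * f 1 = 0 := by
        have hx : f x = x • f 1 := by rw [← f.map_smul, smul_eq_mul, mul_one]
        have hy : f y = y • f 1 := by rw [← f.map_smul, smul_eq_mul, mul_one]
        rw [sub_mul]
        simp only [smul_eq_mul] at hx hy
        rw [← hx, ← hy, hxy, sub_self]
      rcases hd _ _ this with h | h
      · exact sub_eq_zero.mp h
      · exact absurd h h1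
end

section
/- Let R be a ring, M a nonzero compressible R-module, M' an R-module, and ι : M → M' an injective R-linear map. Suppose that: (1) for every submodule N of M and every R-linear map g : N → M, there exists an R-linear map f : M → M' such that f(n) = ι(g(n)) for all n in N (extension property into M'); and (2) every nonzero R-linear map f : M → M' is injective. Then M is critically compressible. -/
/-- If `M` is a nonzero compressible module, `ι : M → M'` is an embedding such
that every partial endomorphism of `M` extends (through `ι`) to a map `M → M'`, and every
nonzero map `M → M'` is injective, then `M` is critically compressible. -/
theorem stmt_17 {R M M' : Type*} [Ring R] [AddCommGroup M] [Module R M]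
    [AddCommGroup M'] [Module R M'] [Nontrivial M]
    (ι : M →ₗ[R] M') (hι : Function.Injective ι)
    (hcomp : ∀ N : Submodule R M, N ≠ ⊥ → ∃ f : M →ₗ[R] N, Function.Injective f)
    (hext : ∀ (N : Submodule R M) (g : N →ₗ[R] M),
      ∃ f : M →ₗ[R] M', ∀ n : N, f n = ι (g n))
    (hmono : ∀ f : M →ₗ[R] M', f ≠ 0 → Function.Injective f) :
    (∀ N : Submodule R M, N ≠ ⊥ → ∃ f : M →ₗ[R] N, Function.Injective f) ∧
      (∀ N : Submodule R M, N ≠ ⊥ → ¬∃ f : M →ₗ[R] (M ⧸ N), Function.Injective f) := by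
  refine ⟨hcomp, ?_⟩
  rintro N hN ⟨f, hf⟩
  set π := N.mkQ with hπ
  set A : Submodule R M := Submodule.comap π (LinearMap.range f) with hA
  let e := LinearEquiv.ofInjective f hf
  let g : A →ₗ[R] M :=
    e.symm.toLinearMap ∘ₗ ((π ∘ₗ A.subtype).codRestrict (LinearMap.range f)
      (fun a => a.2))
  obtain ⟨h, hh⟩ := hext A g
  -- h vanishes on N, so h is not injective, hence h = 0
  obtain ⟨n, hnN, hn0⟩ := N.exists_mem_ne_zero_of_ne_bot hN
  have hnA : n ∈ A := by
    simp only [hA, Submodule.mem_comap, hπ]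
    have : π n = 0 := by simp [hπ, Submodule.mkQ_apply, Submodule.Quotient.mk_eq_zero, hnN]
    rw [this]; exact zero_mem _
  have hgn : g ⟨n, hnA⟩ = 0 := by
    have hpn : π n = 0 := by simp [hπ, Submodule.mkQ_apply, Submodule.Quotient.mk_eq_zero, hnN]
    have : (⟨π n, hnA⟩ : LinearMap.range f) = e 0 := by
      apply Subtype.ext; simp [e, hpn, LinearEquiv.ofInjective]
    simp only [g, LinearMap.comp_apply, LinearMap.codRestrict_apply, Submodule.subtype_apply]
    rw [show ((π ∘ₗ A.subtype).codRestrict (LinearMap.range f) (fun a => a.2)) ⟨n, hnA⟩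
        = (⟨π n, hnA⟩ : LinearMap.range f) from rfl, this]
    simp
  have hhn : h n = 0 := by
    have := hh ⟨n, hnA⟩
    simp only [hgn, map_zero] at this
    exact this
  have hh0 : h = 0 := by
    by_contra hne
    exact hn0 (hmono h hne (by rw [hhn, map_zero]))
  -- but h is nonzero on a preimage of f m for m ≠ 0
  obtain ⟨m, hm⟩ := exists_ne (0 : M)
  obtain ⟨a, ha⟩ := N.mkQ_surjective (f m)
  have haA : a ∈ A := by
    simp only [hA, Submodule.mem_comap, hπ, ha]
    exact ⟨m, rfl⟩
  have hmA : (⟨π a, haA⟩ : LinearMap.range f) = e m := by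
    apply Subtype.ext; simp [e, hπ, ha, LinearEquiv.ofInjective_apply]
  have hga : g ⟨a, haA⟩ = m := by
    simp only [g, LinearMap.comp_apply]
    rw [show ((π ∘ₗ A.subtype).codRestrict (LinearMap.range f) (fun a => a.2)) ⟨a, haA⟩
        = (⟨π a, haA⟩ : LinearMap.range f) from rfl, hmA]
    simp
  have : h a = ι m := by rw [hh ⟨a, haA⟩, hga]
  rw [hh0] at this
  exact hm (hι (by simpa using this.symm))
end

section
/- Let R be a right Noetherian ring with identity. If for every nonzero cyclic uniform submodule U of R (regarded as a module over itself) there exists an injective R-linear map from R into U, then R, regarded as a module over itself, is compressible. -/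
/-- In a Noetherian module, every nonzero submodule contains a nonzero uniform submodule. -/
lemma exists_uniform_sub {R : Type*} [Ring R] [IsNoetherianRing R]
    (N : Submodule R R) (hN : N ≠ ⊥) :
    ∃ U : Submodule R R, U ≤ N ∧ U ≠ ⊥ ∧
      ∀ A B : Submodule R R, A ≤ U → B ≤ U → A ≠ ⊥ → B ≠ ⊥ → A ⊓ B ≠ ⊥ := by
  by_contra hcon
  push_neg at hcon
  -- hcon : ∀ U ≤ N, U ≠ ⊥ → ∃ A B, A ≤ U ∧ B ≤ U ∧ A ≠ ⊥ ∧ B ≠ ⊥ ∧ A ⊓ B = ⊥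
  set S := {B : Submodule R R // B ≤ N ∧ B ≠ ⊥} with hS
  have step : ∀ B : S,
      ∃ A B' : Submodule R R, A ≤ B.1 ∧ B' ≤ B.1 ∧ A ≠ ⊥ ∧ B' ≠ ⊥ ∧ A ⊓ B' = ⊥ :=
    fun B => hcon B.1 B.2.1 B.2.2
  choose Af Bf hAle hBle hA0 hB0 hAB using step
  let Bseq : ℕ → S := fun n => Nat.rec ⟨N, le_refl N, hN⟩
    (fun _ B => ⟨Bf B, (hBle B).trans B.2.1, hB0 B⟩) n
  have Bseq_succ : ∀ n, (Bseq (n+1)).1 = Bf (Bseq n) := fun n => rfl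
  let C : ℕ → Submodule R R := fun n => Nat.rec ⊥ (fun k Ck => Ck ⊔ Af (Bseq k)) n
  have Csucc : ∀ n, C (n+1) = C n ⊔ Af (Bseq n) := fun n => rfl
  have key : ∀ n, C n ⊓ (Bseq n).1 = ⊥ := by
    intro n
    induction n with
    | zero => exact bot_inf_eq _
    | succ n ih =>
      rw [eq_bot_iff]
      rintro x ⟨hxC, hxB⟩
      rw [Csucc] at hxC
      obtain ⟨c, hc, a, ha, hca⟩ := Submodule.mem_sup.mp hxC
      have hxBn : x ∈ (Bseq n).1 := (hBle (Bseq n)) (by rwa [← Bseq_succ])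
      have haBn : a ∈ (Bseq n).1 := hAle (Bseq n) ha
      have hcB : c ∈ (Bseq n).1 := by
        have : c = x - a := by rw [← hca]; abel
        rw [this]; exact Submodule.sub_mem _ hxBn haBn
      have hc0 : c = 0 := by
        have := ih.le ⟨hc, hcB⟩
        simpa using this
      have hxa : x = a := by rw [← hca, hc0, zero_add]
      have : x ∈ Af (Bseq n) ⊓ Bf (Bseq n) := ⟨hxa ▸ ha, by rwa [← Bseq_succ]⟩
      rw [hAB] at this
      simpa using this
  have mono : StrictMono C := by
    apply strictMono_nat_of_lt_succ
    intro n
    rw [Csucc]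
    refine lt_of_le_of_ne le_sup_left fun heq => ?_
    have hsub : Af (Bseq n) ≤ C n := heq ▸ le_sup_right
    have : Af (Bseq n) ≤ C n ⊓ (Bseq n).1 := le_inf hsub (hAle (Bseq n))
    rw [key n] at this
    exact hA0 (Bseq n) (le_bot_iff.mp this)
  obtain ⟨k, hk⟩ := monotone_stabilizes_iff_noetherian.mpr inferInstance
    ⟨C, mono.monotone⟩
  exact absurd (hk (k+1) (Nat.le_succ k)) (mono (Nat.lt_succ_self k)).ne

/-- If `R` is Noetherian and `R` embeds in every nonzero cyclic uniform
submodule of itself, then `R` is compressible as a module over itself. -/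
theorem stmt_18 {R : Type*} [Ring R] [IsNoetherianRing R]
    (h : ∀ U : Submodule R R, U ≠ ⊥ → (∃ a : R, U = Submodule.span R {a}) →
      (∀ A B : Submodule R R, A ≤ U → B ≤ U → A ≠ ⊥ → B ≠ ⊥ → A ⊓ B ≠ ⊥) →
      ∃ f : R →ₗ[R] U, Function.Injective f) :
    ∀ N : Submodule R R, N ≠ ⊥ → ∃ f : R →ₗ[R] N, Function.Injective f := by
  intro N hN
  obtain ⟨U, hUN, hU0, hUuni⟩ := exists_uniform_sub N hN
  obtain ⟨x, hxU, hx0⟩ := Submodule.exists_mem_ne_zero_of_ne_bot hU0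
  set V : Submodule R R := Submodule.span R {x} with hV
  have hVU : V ≤ U := (Submodule.span_singleton_le_iff_mem x U).mpr hxU
  have hV0 : V ≠ ⊥ := by
    simp only [hV, ne_eq, Submodule.span_singleton_eq_bot]
    exact hx0
  have hVuni : ∀ A B : Submodule R R, A ≤ V → B ≤ V → A ≠ ⊥ → B ≠ ⊥ → A ⊓ B ≠ ⊥ :=
    fun A B hA hB => hUuni A B (hA.trans hVU) (hB.trans hVU)
  obtain ⟨f, hf⟩ := h V hV0 ⟨x, rfl⟩ hVuni
  have hle : V ≤ N := hVU.trans hUN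
  refine ⟨(Submodule.inclusion hle).comp f, ?_⟩
  rw [LinearMap.coe_comp]
  exact Function.Injective.comp (Submodule.inclusion_injective hle) hf
end

section
/- Let R be a right Noetherian ring with identity. Then R, regarded as a module over itself, is compressible if and only if it is critically compressible. -/
/-- A compressible Noetherian module-over-itself is uniform: two nonzero
submodules (left ideals) intersect nontrivially. -/
lemma stmt_19_uniform {R : Type*} [Ring R] [IsNoetherianRing R]
    (H : ∀ N : Submodule R R, N ≠ ⊥ → ∃ f : R →ₗ[R] N, Function.Injective f)
    (A B : Submodule R R) (hA : A ≠ ⊥) (hB : B ≠ ⊥) : A ⊓ B ≠ ⊥ := by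
  intro hAB
  obtain ⟨f, hf⟩ := H A hA
  set F : R →ₗ[R] R := A.subtype ∘ₗ f with hF
  have hFinj : Function.Injective F := A.injective_subtype.comp hf
  have hFA : ∀ r : R, F r ∈ A := fun r => (f r).2
  -- the chain D k = B + F(B) + ... + F^k(B)
  set D : ℕ → Submodule R R := fun k => Nat.rec B (fun _ Dk => B ⊔ Dk.map F) k with hD
  have hD0 : D 0 = B := rfl
  have hDsucc : ∀ k, D (k + 1) = B ⊔ (D k).map F := fun k => rfl
  have hDmono : ∀ k, D k ≤ D (k + 1) := by
    intro k
    induction k with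
    | zero => rw [hD0, hDsucc]; exact le_sup_left
    | succ k ih =>
      show B ⊔ (D k).map F ≤ B ⊔ (D (k+1)).map F
      exact sup_le_sup le_rfl (Submodule.map_mono ih)
  have hDmono' : Monotone D := monotone_nat_of_le_succ hDmono
  -- membership: F^k b ∈ D k for b ∈ B
  have hmem : ∀ k, ∀ b ∈ B, (F ^ k) b ∈ D k := by
    intro k
    induction k with
    | zero => intro b hb; simpa [hD0] using hb
    | succ k ih =>
      intro b hb
      rw [hDsucc]
      have : (F ^ (k + 1)) b = F ((F ^ k) b) := by
        rw [pow_succ']; rfl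
      rw [this]
      exact le_sup_right (α := Submodule R R) (Submodule.mem_map_of_mem (ih b hb))
  -- independence: F^(k+1) b ∈ D k → b = 0
  have hindep : ∀ k, ∀ b ∈ B, (F ^ (k + 1)) b ∈ D k → b = 0 := by
    intro k
    induction k with
    | zero =>
      intro b hb h
      rw [hD0] at h
      have h1 : (F ^ 1) b = F b := by simp
      rw [h1] at h
      have : F b ∈ A ⊓ B := ⟨hFA b, h⟩
      rw [hAB, Submodule.mem_bot] at this
      exact hFinj (by simpa using this)
    | succ k ih =>
      intro b hb h
      rw [hDsucc] at h
      rcases Submodule.mem_sup.mp h with ⟨y, hy, z, hz, hyz⟩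
      rcases Submodule.mem_map.mp hz with ⟨d, hd, rfl⟩
      have key : (F ^ (k + 2)) b = F ((F ^ (k + 1)) b) := by
        rw [pow_succ']; rfl
      have hyA : y ∈ A := by
        have : y = F ((F ^ (k + 1)) b - d) := by
          rw [map_sub, ← key, ← hyz]; abel
        rw [this]; exact hFA _
      have hy0 : y = 0 := by
        have : y ∈ A ⊓ B := ⟨hyA, hy⟩
        rwa [hAB, Submodule.mem_bot] at this
      have : F ((F ^ (k + 1)) b) = F d := by
        rw [← key, ← hyz, hy0, zero_add]
      have : (F ^ (k + 1)) b = d := hFinj this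
      exact ih b hb (this ▸ hd)
  -- Noetherian: the chain stabilizes
  obtain ⟨b, hb, hb0⟩ := Submodule.exists_mem_ne_zero_of_ne_bot hB
  obtain ⟨n, hn⟩ := (monotone_stabilizes_iff_noetherian.mpr inferInstance)
    ⟨D, hDmono'⟩
  have h1 : (F ^ (n + 1)) b ∈ D (n + 1) := hmem (n + 1) b hb
  have h2 : D n = D (n + 1) := hn (n + 1) (Nat.le_succ n)
  exact hb0 (hindep n b hb (h2 ▸ h1))

/-- A Noetherian ring is compressible as a module over itself iff it is
critically compressible. -/
theorem stmt_19 {R : Type*} [Ring R] [IsNoetherianRing R] :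
    (∀ N : Submodule R R, N ≠ ⊥ → ∃ f : R →ₗ[R] N, Function.Injective f) ↔
      ((∀ N : Submodule R R, N ≠ ⊥ → ∃ f : R →ₗ[R] N, Function.Injective f) ∧
        (∀ N : Submodule R R, N ≠ ⊥ → ¬∃ f : R →ₗ[R] (R ⧸ N), Function.Injective f)) := by
  constructor
  · intro H
    refine ⟨H, ?_⟩
    rintro N hN ⟨g, hg⟩
    rcases subsingleton_or_nontrivial R with hR | hR
    · exact hN (Subsingleton.elim N ⊥)
    obtain ⟨x, hx⟩ := Submodule.Quotient.mk_surjective N (g 1)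
    have key : ∀ r : R, r • x ∈ N → r = 0 := by
      intro r hr
      have h1 : g r = Submodule.Quotient.mk (r • x) := by
        calc g r = g (r • (1 : R)) := by rw [smul_eq_mul, mul_one]
        _ = r • g 1 := map_smul g r 1
        _ = r • Submodule.Quotient.mk x := by rw [hx]
        _ = Submodule.Quotient.mk (r • x) := (Submodule.Quotient.mk_smul N r x).symm
      have h2 : g r = 0 := by
        rw [h1, Submodule.Quotient.mk_eq_zero]
        exact hr
      exact hg (by rw [h2, map_zero])
    have hx0 : x ≠ 0 := by
      intro h
      have : (1 : R) • x ∈ N := by rw [h, smul_zero]; exact N.zero_mem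
      exact one_ne_zero (key 1 this)
    have hA : Submodule.span R {x} ≠ ⊥ := by
      simpa [Submodule.span_singleton_eq_bot] using hx0
    have := stmt_19_uniform H (Submodule.span R {x}) N hA hN
    obtain ⟨y, hy, hy0⟩ := Submodule.exists_mem_ne_zero_of_ne_bot this
    obtain ⟨r, hr⟩ := Submodule.mem_span_singleton.mp hy.1
    have : r = 0 := key r (by rw [hr]; exact hy.2)
    exact hy0 (by rw [← hr, this, zero_smul])
  · exact fun h => h.1
end
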